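/- arXiv:2010.03643 — 3 statements merged into one kernel-verified Lean document; each statement's English description precedes it below -/
import Mathlib

section
/- Let $\pg$ be a finite-dimensional real inner product space and let $\theta:\mathfrak{gl}(\pg)\to\mathrm{End}(\Lambda^2\pg^*\otimes\pg)$ be the representation $\theta(A)\lambda := A\lambda(\cdot,\cdot) - \lambda(A\cdot,\cdot) - \lambda(\cdot,A\cdot)$. Fix $\mu_\pg\in\Lambda^2\pg^*\otimes\pg$ and define the moment map $\Mm_\lambda\in\mathfrak{gl}(\pg)$ by $\langle \Mm_\lambda, A\rangle = \tfrac14 \langle\theta(A)\lambda,\lambda\rangle$ for all $A$. Then for symmetric $A,B$, the derivative at the identity of $h\mapsto \Mm_{h\cdot\mu_\pg}$ satisfies $\langle d\Mm|_I A, B\rangle = \tfrac12\langle \theta(A)\mu_\pg, \theta(B)\mu_\pg\rangle$; in particular $d\Mm|_I$ is a self-adjoint operator on symmetric maps. -/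
/-!
Along the curve `hₜ = 1 + tA`, which is invertible for small `t`, the bracket `hₜ·μ` has velocity
`θ(A)μ` at `t = 0`. Differentiating `⟨M_{hₜ·μ}, B⟩ = ¼⟨θ(B)(hₜ·μ), hₜ·μ⟩` therefore gives
`¼(⟨θ(B)μ, θ(A)μ⟩ + ⟨θ(B)θ(A)μ, μ⟩)`. For symmetric `B` the operator `θ(B)` is self-adjoint for
the inner product on brackets (by cyclicity of the trace, `Σᵢ ⟪S(Beᵢ), Teᵢ⟫ = Σᵢ ⟪Seᵢ, T(Beᵢ)⟫`),
so both terms equal `⟨θ(A)μ, θ(B)μ⟩`.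
-/

noncomputable section


variable {V : Type*} [NormedAddCommGroup V] [InnerProductSpace ℝ V] [FiniteDimensional ℝ V]

/-- The representation `θ(A)λ = Aλ(·,·) - λ(A·,·) - λ(·,A·)`. -/
def theta (A : Module.End ℝ V) (lam : V → V → V) : V → V → V :=
  fun X Y => A (lam X Y) - lam (A X) Y - lam X (A Y)

/-- The inner product on `Λ²p*⊗p` relative to an orthonormal basis. -/
def bip {ι : Type*} [Fintype ι] (b : OrthonormalBasis ι ℝ V) (f g : V → V → V) : ℝ :=
  ∑ i, ∑ j, (inner ℝ (f (b i) (b j)) (g (b i) (b j)) : ℝ)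

/-- The trace inner product `⟨A,B⟩ = tr(A Bᵗ)` on `gl(p)`. -/
def eip (A B : Module.End ℝ V) : ℝ :=
  LinearMap.trace ℝ V (A ∘ₗ LinearMap.adjoint (B : V →ₗ[ℝ] V))

/-- The `GL(p)`-action `h·μ = h μ(h⁻¹·,h⁻¹·)`. -/
def act (h : Module.End ℝ V) (lam : V → V → V) : V → V → V :=
  fun X Y => h (lam (Ring.inverse h X) (Ring.inverse h Y))

open Filter Topology
open scoped InnerProductSpace

section RingInverse

variable {𝕜 R : Type*} [NontriviallyNormedField 𝕜] [NormedRing R] [NormedAlgebra 𝕜 R]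
  [HasSummableGeomSeries R]

lemma hasDerivAt_ringInverse_one_add_smul (a : R) :
    HasDerivAt (fun t : 𝕜 => Ring.inverse (1 + t • a)) (-a) 0 := by
  have hline : HasDerivAt (fun t : 𝕜 => 1 + t • a) a 0 := by
    simpa using ((hasDerivAt_id (0 : 𝕜)).smul_const a).const_add 1
  refine ((hasFDerivAt_ringInverse (𝕜 := 𝕜) (1 : Rˣ)).comp_hasDerivAt_of_eq 0 hline
    (by simp)).congr_deriv ?_
  simp

lemma eventually_isUnit_one_add_smul (a : R) : ∀ᶠ t : 𝕜 in 𝓝 0, IsUnit (1 + t • a) := by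
  have hline : Continuous fun t : 𝕜 => 1 + t • a := by fun_prop
  have hunits : {u : R | IsUnit u} ∈ 𝓝 ((fun t : 𝕜 => 1 + t • a) 0) := by
    simpa using Units.isOpen.mem_nhds (isUnit_one (M := R))
  exact hline.continuousAt.eventually_mem hunits

end RingInverse

lemma hasDerivAt_one_add_smul_conj_bilinear {𝕜 E : Type*} [NontriviallyNormedField 𝕜]
    [NormedAddCommGroup E] [NormedSpace 𝕜 E] [CompleteSpace E]
    (μ : E →L[𝕜] E →L[𝕜] E) (a : E →L[𝕜] E) (x y : E) :
    HasDerivAt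
      (fun t : 𝕜 => (1 + t • a) (μ (Ring.inverse (1 + t • a) x) (Ring.inverse (1 + t • a) y)))
      (a (μ x y) - μ (a x) y - μ x (a y)) 0 := by
  have hinv : ∀ z, HasDerivAt (fun t : 𝕜 => Ring.inverse (1 + t • a) z) (-a z) 0 := fun z => by
    simpa using (hasDerivAt_ringInverse_one_add_smul a).clm_apply (hasDerivAt_const 0 z)
  have hμ := (μ.hasFDerivAt.comp_hasDerivAt 0 (hinv x)).clm_apply (hinv y)
  have hline : HasDerivAt (fun t : 𝕜 => 1 + t • a) a 0 := by
    simpa using ((hasDerivAt_id (0 : 𝕜)).smul_const a).const_add 1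
  convert hline.clm_apply hμ using 1
  simp only [Function.comp_apply]
  simp
  abel

lemma map_ringInverse {F M₀ N₀ : Type*} [MonoidWithZero M₀] [MonoidWithZero N₀]
    [EquivLike F M₀ N₀] [MulEquivClass F M₀ N₀] (e : F) (x : M₀) :
    e (Ring.inverse x) = Ring.inverse (e x) := by
  by_cases hx : IsUnit x
  · have h := (Ring.eq_mul_inverse_iff_mul_eq (e (Ring.inverse x)) 1 (e x)
      ((MulEquiv.isUnit_map e).2 hx)).2 (by rw [← map_mul, Ring.inverse_mul_cancel x hx, map_one])
    rwa [one_mul] at h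
  · rw [Ring.inverse_non_unit x hx, Ring.inverse_non_unit _ (mt (MulEquiv.isUnit_map e).1 hx),
      map_zero]

lemma act_one {E : Type*} [NormedAddCommGroup E] [InnerProductSpace ℝ E] (lam : E → E → E) :
    act 1 lam = lam := by
  funext X Y
  simp [act]

lemma hasDerivAt_act_one_add_smul (A : Module.End ℝ V) (μ : V →ₗ[ℝ] V →ₗ[ℝ] V) (X Y : V) :
    HasDerivAt (fun t : ℝ => act (1 + t • A) (fun X Y => μ X Y) X Y)
      (theta A (fun X Y => μ X Y) X Y) 0 := by
  let φ := Module.End.toContinuousLinearMap (𝕜 := ℝ) V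
  have hφ : ∀ t : ℝ, act (1 + t • A) (fun X Y => μ X Y) X Y =
      (1 + t • φ A) (μ.toContinuousBilinearMap (Ring.inverse (1 + t • φ A) X)
        (Ring.inverse (1 + t • φ A) Y)) := fun t => by
    simp only [← map_one φ, ← map_smul, ← map_add, ← map_ringInverse]
    rfl
  convert hasDerivAt_one_add_smul_conj_bilinear μ.toContinuousBilinearMap (φ A) X Y using 1
  · exact funext hφ
  · rfl

lemma Module.End.eventually_isUnit_one_add_smul (A : Module.End ℝ V) :
    ∀ᶠ t : ℝ in 𝓝 0, IsUnit (1 + t • A) := by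
  let φ := Module.End.toContinuousLinearMap (𝕜 := ℝ) V
  filter_upwards [_root_.eventually_isUnit_one_add_smul (𝕜 := ℝ) (φ A)] with t ht
  rwa [← MulEquiv.isUnit_map φ, map_add, map_one, map_smul]

section InnerProductSpace

variable {E : Type*} [NormedAddCommGroup E] [InnerProductSpace ℝ E]

def thetaBilin (A : Module.End ℝ E) (m : E →ₗ[ℝ] E →ₗ[ℝ] E) : E →ₗ[ℝ] E →ₗ[ℝ] E :=
  m.compr₂ A - m.compl₁₂ A LinearMap.id - m.compl₁₂ LinearMap.id A

lemma theta_eq_thetaBilin (A : Module.End ℝ E) (m : E →ₗ[ℝ] E →ₗ[ℝ] E) :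
    theta A (fun X Y => m X Y) = fun X Y => thetaBilin A m X Y :=
  rfl

lemma hasDerivAt_theta [FiniteDimensional ℝ E] (B : Module.End ℝ E) {lam : ℝ → E → E → E}
    {lam' : E → E → E} {t₀ : ℝ} (h : ∀ X Y, HasDerivAt (fun t => lam t X Y) (lam' X Y) t₀)
    (X Y : E) : HasDerivAt (fun t => theta B (lam t) X Y) (theta B lam' X Y) t₀ :=
  (((LinearMap.toContinuousLinearMap B).hasFDerivAt.comp_hasDerivAt t₀ (h X Y)).sub
    (h (B X) Y)).sub (h X (B Y))

variable {ι : Type*} [Fintype ι] (b : OrthonormalBasis ι ℝ E)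

lemma bip_comm (f g : E → E → E) : bip b f g = bip b g f :=
  Finset.sum_congr rfl fun _ _ => Finset.sum_congr rfl fun _ _ => real_inner_comm _ _

lemma hasDerivAt_bip {f g : ℝ → E → E → E} {f' g' : E → E → E} {t₀ : ℝ}
    (hf : ∀ X Y, HasDerivAt (fun t => f t X Y) (f' X Y) t₀)
    (hg : ∀ X Y, HasDerivAt (fun t => g t X Y) (g' X Y) t₀) :
    HasDerivAt (fun t => bip b (f t) (g t)) (bip b (f t₀) g' + bip b f' (g t₀)) t₀ := by
  refine (HasDerivAt.fun_sum (u := Finset.univ) fun i _ => HasDerivAt.fun_sum (u := Finset.univ)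
    fun j _ => (hf (b i) (b j)).inner ℝ (hg (b i) (b j))).congr_deriv ?_
  simp only [bip, Finset.sum_add_distrib]

lemma sum_inner_map_isSymmetric [FiniteDimensional ℝ E] {F : Type*} [NormedAddCommGroup F]
    [InnerProductSpace ℝ F] [FiniteDimensional ℝ F] {B : Module.End ℝ E} (hB : B.IsSymmetric)
    (S T : E →ₗ[ℝ] F) :
    ∑ i, ⟪S (B (b i)), T (b i)⟫_ℝ = ∑ i, ⟪S (b i), T (B (b i))⟫_ℝ := by
  have hleft : ∀ x, ⟪S (B x), T x⟫_ℝ = ⟪x, (B * (S.adjoint ∘ₗ T)) x⟫_ℝ := fun x => by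
    rw [Module.End.mul_apply, ← hB, LinearMap.comp_apply, LinearMap.adjoint_inner_right]
  have hright : ∀ x, ⟪S x, T (B x)⟫_ℝ = ⟪x, ((S.adjoint ∘ₗ T) * B) x⟫_ℝ := fun x => by
    rw [Module.End.mul_apply, LinearMap.comp_apply, LinearMap.adjoint_inner_right]
  simp only [hleft, hright, ← LinearMap.trace_eq_sum_inner, LinearMap.trace_mul_comm ℝ B]

lemma bip_theta_left_of_isSymmetric [FiniteDimensional ℝ E] {B : Module.End ℝ E}
    (hB : B.IsSymmetric) (m p : E →ₗ[ℝ] E →ₗ[ℝ] E) :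
    bip b (theta B fun X Y => m X Y) (fun X Y => p X Y) =
      bip b (fun X Y => m X Y) (theta B fun X Y => p X Y) := by
  have hfst : ∑ i, ∑ j, ⟪m (B (b i)) (b j), p (b i) (b j)⟫_ℝ =
      ∑ i, ∑ j, ⟪m (b i) (b j), p (B (b i)) (b j)⟫_ℝ := by
    rw [Finset.sum_comm, Finset.sum_comm (f := fun i j => ⟪m (b i) (b j), p (B (b i)) (b j)⟫_ℝ)]
    exact Finset.sum_congr rfl fun j _ =>
      sum_inner_map_isSymmetric b hB (m.flip (b j)) (p.flip (b j))
  have hsnd : ∑ i, ∑ j, ⟪m (b i) (B (b j)), p (b i) (b j)⟫_ℝ =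
      ∑ i, ∑ j, ⟪m (b i) (b j), p (b i) (B (b j))⟫_ℝ :=
    Finset.sum_congr rfl fun i _ => sum_inner_map_isSymmetric b hB (m (b i)) (p (b i))
  have hout : ∀ x y, ⟪B x, y⟫_ℝ = ⟪x, B y⟫_ℝ := hB
  simp only [bip, theta, inner_sub_left, inner_sub_right, Finset.sum_sub_distrib, hfst, hsnd, hout]

end InnerProductSpace

theorem statement0_general {n : ℕ} (b : OrthonormalBasis (Fin n) ℝ V)
    (μ : V →ₗ[ℝ] V →ₗ[ℝ] V)
    (M : Module.End ℝ V → Module.End ℝ V)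
    (hM : ∀ h : Module.End ℝ V, IsUnit h → ∀ A : Module.End ℝ V,
      eip (M h) A =
        (1/4) * bip b (theta A (act h (fun X Y => μ X Y))) (act h (fun X Y => μ X Y)))
    (A B : Module.End ℝ V)
    (hB : LinearMap.IsSymmetric (B : V →ₗ[ℝ] V)) :
    HasDerivAt (fun t : ℝ => eip (M (1 + t • A)) B)
      ((1/2) * bip b (theta A (fun X Y => μ X Y)) (theta B (fun X Y => μ X Y))) 0 ∧
    (1/2) * bip b (theta A (fun X Y => μ X Y)) (theta B (fun X Y => μ X Y)) =
      (1/2) * bip b (theta B (fun X Y => μ X Y)) (theta A (fun X Y => μ X Y)) := by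
  have hact := hasDerivAt_act_one_add_smul A μ
  have hquarter := (hasDerivAt_bip b (hasDerivAt_theta B hact) hact).const_mul (1/4 : ℝ)
  simp only [zero_smul, add_zero, act_one] at hquarter
  have hvalue : (1/4) * (bip b (theta B fun X Y => μ X Y) (theta A fun X Y => μ X Y) +
      bip b (theta B (theta A fun X Y => μ X Y)) fun X Y => μ X Y) =
      (1/2) * bip b (theta A fun X Y => μ X Y) (theta B fun X Y => μ X Y) := by
    have hselfAdjoint : bip b (theta B (theta A fun X Y => μ X Y)) (fun X Y => μ X Y) =
        bip b (theta A fun X Y => μ X Y) (theta B fun X Y => μ X Y) := by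
      rw [theta_eq_thetaBilin A μ]
      exact bip_theta_left_of_isSymmetric b hB _ _
    rw [hselfAdjoint, bip_comm b (theta B _)]
    ring
  refine ⟨?_, by rw [bip_comm]⟩
  -- `hM` describes `M` only at invertible `h`, which `1 + t • A` is for `t` near `0`.
  exact (hvalue ▸ hquarter).congr_of_eventuallyEq
    ((Module.End.eventually_isUnit_one_add_smul A).mono fun t ht => hM _ ht B)

theorem statement0 {n : ℕ} (b : OrthonormalBasis (Fin n) ℝ V)
    (μ : V →ₗ[ℝ] V →ₗ[ℝ] V) (halt : ∀ X, μ X X = 0)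
    (M : Module.End ℝ V → Module.End ℝ V)
    (hM : ∀ h : Module.End ℝ V, IsUnit h → ∀ A : Module.End ℝ V,
      eip (M h) A =
        (1/4) * bip b (theta A (act h (fun X Y => μ X Y))) (act h (fun X Y => μ X Y)))
    (A B : Module.End ℝ V)
    (hA : LinearMap.IsSymmetric (A : V →ₗ[ℝ] V))
    (hB : LinearMap.IsSymmetric (B : V →ₗ[ℝ] V)) :
    HasDerivAt (fun t : ℝ => eip (M (1 + t • A)) B)
      ((1/2) * bip b (theta A (fun X Y => μ X Y)) (theta B (fun X Y => μ X Y))) 0 ∧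
    (1/2) * bip b (theta A (fun X Y => μ X Y)) (theta B (fun X Y => μ X Y)) =
      (1/2) * bip b (theta B (fun X Y => μ X Y)) (theta A (fun X Y => μ X Y)) :=
  statement0_general b μ M hM A B hB
end
end

section
/- On $\SU(2)$ (structure constants $[X_1,X_2]=-\tfrac{1}{\sqrt2}X_3$, $[X_1,X_3]=\tfrac{1}{\sqrt2}X_2$, $[X_2,X_3]=-\tfrac{1}{\sqrt2}X_1$), the diagonal metrics $g_{1,b,1-b}$ for $0<b<1$ all have the same Ricci tensor $\mathrm{diag}(1,0,0)$, computed via the formula $\ricci(g_{a,b,d}) = \mathrm{diag}\big(\tfrac{a^2-(d-b)^2}{4bd},\tfrac{b^2-(a-d)^2}{4ad},\tfrac{d^2-(a-b)^2}{4ab}\big)$; hence the map $g\mapsto\ricci(g)$ is not injective up to scaling on diagonal left-invariant metrics on $\SU(2)$. -/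
/-
On the line `d = a - b` the second and third numerators of `ricSU2 a b d` vanish identically,
and the first one is `a² - (a - 2b)² = 4b(a - b)`, which cancels its denominator.
The metrics `g_{1,b,1-b}` are normalised by their first entry, so two of them are proportional
only if they coincide.
-/

noncomputable section

/-- The Ricci tensor of the diagonal left-invariant metric `g_{a,b,d} = diag(a,b,d)` on
`SU(2)` (structure constants `[X₁,X₂] = -X₃/√2`, `[X₁,X₃] = X₂/√2`, `[X₂,X₃] = -X₁/√2`,
i.e. `ε = -1`). -/
def ricSU2 (a b d : ℝ) : Matrix (Fin 3) (Fin 3) ℝ :=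
  Matrix.diagonal
    ![(a^2 - (d - b)^2)/(4*b*d), (b^2 - (a - d)^2)/(4*a*d), (d^2 - (a - b)^2)/(4*a*b)]

theorem ricSU2_sub_right (a b : ℝ) (hb : b ≠ 0) (hba : b ≠ a) :
    ricSU2 a b (a - b) = Matrix.diagonal ![1, 0, 0] := by
  have hab : a - b ≠ 0 := sub_ne_zero.mpr hba.symm
  have first : (a ^ 2 - (a - b - b) ^ 2) / (4 * b * (a - b)) = 1 := by
    field_simp
    ring
  simp only [ricSU2, first, sub_sub_cancel, sub_self]
  norm_num

theorem eq_of_diagonal_one_eq_smul_diagonal_one {x y x' y' c : ℝ}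
    (h : (Matrix.diagonal ![1, x, y] : Matrix (Fin 3) (Fin 3) ℝ) =
      c • Matrix.diagonal ![1, x', y']) :
    x = x' ∧ y = y' := by
  have entry (i : Fin 3) := congrFun (congrFun h i) i
  have hc : 1 = c := by simpa using entry 0
  subst hc
  exact ⟨by simpa using entry 1, by simpa using entry 2⟩

theorem statement12 :
    (∀ b : ℝ, 0 < b → b < 1 → ricSU2 1 b (1 - b) = Matrix.diagonal ![1, 0, 0]) ∧
    (∃ b₁ b₂ : ℝ, 0 < b₁ ∧ b₁ < 1 ∧ 0 < b₂ ∧ b₂ < 1 ∧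
      ricSU2 1 b₁ (1 - b₁) = ricSU2 1 b₂ (1 - b₂) ∧
      ∀ c : ℝ, (Matrix.diagonal ![1, b₁, 1 - b₁] : Matrix (Fin 3) (Fin 3) ℝ) ≠
        c • Matrix.diagonal ![1, b₂, 1 - b₂]) := by
  have ricci_const (b : ℝ) (hb : 0 < b) (hb1 : b < 1) :
      ricSU2 1 b (1 - b) = Matrix.diagonal ![1, 0, 0] :=
    ricSU2_sub_right 1 b hb.ne' hb1.ne
  refine ⟨ricci_const, 1 / 3, 1 / 2, by norm_num, by norm_num, by norm_num, by norm_num, ?_, ?_⟩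
  · rw [ricci_const _ (by norm_num) (by norm_num), ricci_const _ (by norm_num) (by norm_num)]
  · intro c h
    have hb := (eq_of_diagonal_one_eq_smul_diagonal_one h).1
    norm_num at hb
end
end

section
/- Let $g$ be naturally reductive with respect to $G$ and the pervasive reductive decomposition $\ggo=\kg\oplus\pg$, with associated nondegenerate $\mathrm{ad}$-invariant form $Q$ on $\ggo$ satisfying $Q(\kg,\pg)=0$ and $Q|_{\pg\times\pg}$ positive definite. If there is a $Q|_\pg$-orthogonal $\mathrm{ad}\,\kg$-invariant decomposition $\pg=\pg_1\oplus\pg_2$ with $\pg_i\neq 0$, $[\pg_i,\pg_i]_\pg\subset\pg_i$ and $[\pg_1,\pg_2]_\pg=0$, then $\ggo=\ggo_1\oplus\ggo_2$ where $\ggo_i := [\pg_i,\pg_i]_\kg\oplus\pg_i$ are nonzero ideals of $\ggo$, and $\kg=\kg\cap\ggo_1\oplus\kg\cap\ggo_2$ (i.e., $\kg$ is $\ggo$-decomposable). -/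
noncomputable section

variable {L : Type*} [LieRing L] [LieAlgebra ℝ L]

/-- The span of all brackets `⁅x,y⁆` with `x ∈ S`, `y ∈ T`. -/
def spanBr (S T : Submodule ℝ L) : Submodule ℝ L :=
  Submodule.span ℝ {z : L | ∃ x ∈ S, ∃ y ∈ T, z = ⁅x, y⁆}

private lemma auxA (k p pa : Submodule ℝ L) (hc : IsCompl k p)
    (hbaa : ∀ x ∈ pa, ∀ y ∈ pa,
      (p.subtype ∘ₗ Submodule.linearProjOfIsCompl p k hc.symm) ⁅x, y⁆ ∈ pa) :
    ∀ z ∈ spanBr pa pa,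
      (p.subtype ∘ₗ Submodule.linearProjOfIsCompl p k hc.symm) z ∈ pa := by
  intro z hz
  refine Submodule.span_induction ?_ ?_ ?_ ?_ hz
  · rintro _ ⟨x, hx, y, hy, rfl⟩; exact hbaa x hx y hy
  · rw [map_zero]; exact pa.zero_mem
  · intro a b _ _ ha hb; rw [map_add]; exact pa.add_mem ha hb
  · intro c a _ ha; rw [map_smul]; exact pa.smul_mem c ha

private lemma auxC (pa pb : Submodule ℝ L)
    (hbab : ∀ x ∈ pa, ∀ y ∈ pb, ⁅x, y⁆ = (0 : L)) :
    ∀ z ∈ spanBr pa pa, ∀ w ∈ pb, ⁅z, w⁆ = (0 : L) := by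
  intro z hz
  refine Submodule.span_induction ?_ ?_ ?_ ?_ hz
  · rintro _ ⟨x, hx, y, hy, rfl⟩ w hw
    rw [lie_lie, hbab x hx w hw, hbab y hy w hw, lie_zero, lie_zero, sub_zero]
  · intro w _; rw [zero_lie]
  · intro a b _ _ ha hb w hw; rw [add_lie, ha w hw, hb w hw, add_zero]
  · intro c a _ ha w hw; rw [smul_lie, ha w hw, smul_zero]

private lemma auxK (k p pa pb : Submodule ℝ L) (hc : IsCompl k p)
    (hbaa : ∀ x ∈ pa, ∀ y ∈ pa,
      (p.subtype ∘ₗ Submodule.linearProjOfIsCompl p k hc.symm) ⁅x, y⁆ ∈ pa)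
    (hbab : ∀ x ∈ pa, ∀ y ∈ pb, ⁅x, y⁆ = (0 : L)) :
    ∀ u ∈ Submodule.map (k.subtype ∘ₗ Submodule.linearProjOfIsCompl k p hc)
      (spanBr pa pa), ∀ w ∈ pb, ⁅u, w⁆ = (0 : L) := by
  intro u hu w hw
  rcases Submodule.mem_map.mp hu with ⟨z, hz, rfl⟩
  have hd : (k.subtype ∘ₗ Submodule.linearProjOfIsCompl k p hc) z
      = z - (p.subtype ∘ₗ Submodule.linearProjOfIsCompl p k hc.symm) z := by
    rw [eq_sub_iff_add_eq]
    exact Submodule.projection_add_projection_eq_self hc z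
  rw [hd, sub_lie, auxC pa pb hbab z hz w hw,
    hbab _ (auxA k p pa hc hbaa z hz) w hw, sub_zero]

private lemma auxIdeal (k p pa pb : Submodule ℝ L) (hc : IsCompl k p)
    (hka : ∀ z ∈ k, ∀ x ∈ pa, ⁅z, x⁆ ∈ pa)
    (hbab : ∀ x ∈ pa, ∀ y ∈ pb, ⁅x, y⁆ = (0 : L))
    (hbaa : ∀ x ∈ pa, ∀ y ∈ pa,
      (p.subtype ∘ₗ Submodule.linearProjOfIsCompl p k hc.symm) ⁅x, y⁆ ∈ pa)
    (hsupw : ∀ w : L, ∃ z ∈ k, ∃ w₁ ∈ pa, ∃ w₂ ∈ pb, w = z + w₁ + w₂) :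
    ∀ w : L, ∀ s ∈ Submodule.map (k.subtype ∘ₗ Submodule.linearProjOfIsCompl k p hc)
        (spanBr pa pa) ⊔ pa,
      ⁅w, s⁆ ∈ Submodule.map (k.subtype ∘ₗ Submodule.linearProjOfIsCompl k p hc)
        (spanBr pa pa) ⊔ pa := by
  set πk : L →ₗ[ℝ] L := k.subtype ∘ₗ Submodule.linearProjOfIsCompl k p hc with hπk
  set πp : L →ₗ[ℝ] L := p.subtype ∘ₗ Submodule.linearProjOfIsCompl p k hc.symm with hπp
  set ga : Submodule ℝ L := Submodule.map πk (spanBr pa pa) ⊔ pa with hga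
  have hdecomp : ∀ v : L, πk v + πp v = v := fun v =>
    Submodule.projection_add_projection_eq_self hc v
  have hπkm : ∀ v : L, πk v ∈ k := fun v => Submodule.coe_mem _
  have hspan : spanBr pa pa ≤ ga := by
    apply Submodule.span_le.mpr
    rintro _ ⟨x, hx, y, hy, rfl⟩
    have h : ⁅x, y⁆ = πk ⁅x, y⁆ + πp ⁅x, y⁆ := (hdecomp _).symm
    rw [h]
    exact Submodule.add_mem _
      (Submodule.mem_sup_left
        (Submodule.mem_map_of_mem (Submodule.subset_span ⟨x, hx, y, hy, rfl⟩)))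
      (Submodule.mem_sup_right (hbaa x hx y hy))
  have hks : ∀ z ∈ k, ∀ s ∈ ga, ⁅z, s⁆ ∈ ga := by
    intro z hz s hs
    rcases Submodule.mem_sup.mp hs with ⟨u, hu, v, hv, rfl⟩
    rw [lie_add]
    refine Submodule.add_mem _ ?_ (Submodule.mem_sup_right (hka z hz v hv))
    rcases Submodule.mem_map.mp hu with ⟨t, ht, rfl⟩
    have hzt : ∀ t' : L, t' ∈ spanBr pa pa → ⁅z, t'⁆ ∈ ga := by
      intro t' ht'
      refine Submodule.span_induction ?_ ?_ ?_ ?_ ht'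
      · rintro _ ⟨x, hx, y, hy, rfl⟩
        rw [leibniz_lie]
        exact Submodule.add_mem _
          (hspan (Submodule.subset_span ⟨_, hka z hz x hx, _, hy, rfl⟩))
          (hspan (Submodule.subset_span ⟨_, hx, _, hka z hz y hy, rfl⟩))
      · rw [lie_zero]; exact Submodule.zero_mem _
      · intro a b _ _ ha hb; rw [lie_add]; exact Submodule.add_mem _ ha hb
      · intro c a _ ha; rw [lie_smul]; exact Submodule.smul_mem _ c ha
    have hd : πk t = t - πp t := by rw [eq_sub_iff_add_eq]; exact hdecomp t
    rw [hd, lie_sub]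
    exact Submodule.sub_mem _ (hzt t ht)
      (Submodule.mem_sup_right (hka z hz _ (auxA k p pa hc hbaa t ht)))
  have has : ∀ z ∈ pa, ∀ s ∈ ga, ⁅z, s⁆ ∈ ga := by
    intro z hz s hs
    rcases Submodule.mem_sup.mp hs with ⟨u, hu, v, hv, rfl⟩
    rw [lie_add]
    refine Submodule.add_mem _ ?_
      (hspan (Submodule.subset_span ⟨z, hz, v, hv, rfl⟩))
    rcases Submodule.mem_map.mp hu with ⟨t, ht, rfl⟩
    have h : ⁅z, πk t⁆ = -⁅πk t, z⁆ := (lie_skew _ _).symm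
    rw [h]
    exact Submodule.mem_sup_right (pa.neg_mem (hka _ (hπkm t) z hz))
  have hbs : ∀ z ∈ pb, ∀ s ∈ ga, ⁅z, s⁆ ∈ ga := by
    intro z hz s hs
    rcases Submodule.mem_sup.mp hs with ⟨u, hu, v, hv, rfl⟩
    rw [lie_add]
    refine Submodule.add_mem _ ?_ ?_
    · have h : ⁅z, u⁆ = -⁅u, z⁆ := (lie_skew _ _).symm
      rw [h, auxK k p pa pb hc hbaa hbab u hu z hz, neg_zero]
      exact Submodule.zero_mem _
    · have h : ⁅z, v⁆ = -⁅v, z⁆ := (lie_skew _ _).symm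
      rw [h, hbab v hv z hz, neg_zero]
      exact Submodule.zero_mem _
  intro w s hs
  obtain ⟨z, hz, w₁, hw₁, w₂, hw₂, rfl⟩ := hsupw w
  rw [add_lie, add_lie]
  exact Submodule.add_mem _
    (Submodule.add_mem _ (hks z hz s hs) (has w₁ hw₁ s hs)) (hbs w₂ hw₂ s hs)

/-- if a pervasive naturally reductive decomposition `g = k ⊕ p` (with its
associated invariant form `Q`) admits a `Q`-orthogonal `ad k`-invariant splitting
`p = p₁ ⊕ p₂` with `[pᵢ,pᵢ]_p ⊆ pᵢ` and `[p₁,p₂]_p = 0`, then `g = g₁ ⊕ g₂` with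
`gᵢ = [pᵢ,pᵢ]_k ⊕ pᵢ` nonzero ideals, and `k = k ∩ g₁ ⊕ k ∩ g₂`. -/
theorem statement16 (Q : L →ₗ[ℝ] L →ₗ[ℝ] ℝ)
    (hQsym : ∀ x y : L, Q x y = Q y x)
    (hQinv : ∀ w y z : L, Q ⁅w, y⁆ z + Q y ⁅w, z⁆ = 0)
    (k p : Submodule ℝ L) (hc : IsCompl k p)
    (hkk : ∀ x ∈ k, ∀ y ∈ k, ⁅x, y⁆ ∈ k)
    (hkp : ∀ x ∈ k, ∀ y ∈ p, ⁅x, y⁆ ∈ p)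
    -- pervasiveness: `[p,p]_k = k`
    (hperv : Submodule.map (k.subtype ∘ₗ Submodule.linearProjOfIsCompl k p hc)
      (spanBr p p) = k)
    (hQkp : ∀ x ∈ k, ∀ y ∈ p, Q x y = 0)
    (hQpos : ∀ x ∈ p, x ≠ 0 → 0 < Q x x)
    (hQnd : ∀ v : L, (∀ w : L, Q v w = 0) → v = 0)
    (p₁ p₂ : Submodule ℝ L) (hp1 : p₁ ≤ p) (hp2 : p₂ ≤ p)
    (hp1n : p₁ ≠ ⊥) (hp2n : p₂ ≠ ⊥) (hsup : p₁ ⊔ p₂ = p)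
    (hQ12 : ∀ x ∈ p₁, ∀ y ∈ p₂, Q x y = 0)
    (hk1 : ∀ z ∈ k, ∀ x ∈ p₁, ⁅z, x⁆ ∈ p₁)
    (hk2 : ∀ z ∈ k, ∀ x ∈ p₂, ⁅z, x⁆ ∈ p₂)
    (hb11 : ∀ x ∈ p₁, ∀ y ∈ p₁,
      (p.subtype ∘ₗ Submodule.linearProjOfIsCompl p k hc.symm) ⁅x, y⁆ ∈ p₁)
    (hb22 : ∀ x ∈ p₂, ∀ y ∈ p₂,
      (p.subtype ∘ₗ Submodule.linearProjOfIsCompl p k hc.symm) ⁅x, y⁆ ∈ p₂)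
    (hb12 : ∀ x ∈ p₁, ∀ y ∈ p₂,
      (p.subtype ∘ₗ Submodule.linearProjOfIsCompl p k hc.symm) ⁅x, y⁆ = 0) :
    let πk := k.subtype ∘ₗ Submodule.linearProjOfIsCompl k p hc
    let g₁ := Submodule.map πk (spanBr p₁ p₁) ⊔ p₁
    let g₂ := Submodule.map πk (spanBr p₂ p₂) ⊔ p₂
    (∀ w : L, ∀ s ∈ g₁, ⁅w, s⁆ ∈ g₁) ∧
    (∀ w : L, ∀ s ∈ g₂, ⁅w, s⁆ ∈ g₂) ∧
    g₁ ≠ ⊥ ∧ g₂ ≠ ⊥ ∧ IsCompl g₁ g₂ ∧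
    k = (k ⊓ g₁) ⊔ (k ⊓ g₂) := by
  intro πk g₁ g₂
  have hπkm : ∀ v : L, πk v ∈ k := fun v => Submodule.coe_mem _
  have hπp : ∀ v : L,
      (p.subtype ∘ₗ Submodule.linearProjOfIsCompl p k hc.symm) v ∈ p :=
    fun v => Submodule.coe_mem _
  have hdecomp : ∀ v : L,
      πk v + (p.subtype ∘ₗ Submodule.linearProjOfIsCompl p k hc.symm) v = v :=
    fun v => Submodule.projection_add_projection_eq_self hc v
  -- step 1 : [p₁, p₂] = 0
  have hbr12 : ∀ x ∈ p₁, ∀ y ∈ p₂, ⁅x, y⁆ = (0 : L) := by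
    intro x hx y hy
    have hp0 : (p.subtype ∘ₗ Submodule.linearProjOfIsCompl p k hc.symm) ⁅x, y⁆ = 0 :=
      hb12 x hx y hy
    have hmemk : ⁅x, y⁆ ∈ k := by
      have h := hdecomp ⁅x, y⁆
      rw [hp0, add_zero] at h
      rw [← h]; exact hπkm _
    apply hQnd
    intro w
    have h2 : Q y ⁅x, πk w⁆ = 0 := by
      have hxz : ⁅x, πk w⁆ ∈ p₁ := by
        rw [← lie_skew]
        exact p₁.neg_mem (hk1 _ (hπkm w) x hx)
      rw [hQsym]
      exact hQ12 _ hxz y hy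
    have h1 : Q ⁅x, y⁆ (πk w) = 0 := by
      have hinv := hQinv x y (πk w)
      linarith
    have h3 : Q ⁅x, y⁆
        ((p.subtype ∘ₗ Submodule.linearProjOfIsCompl p k hc.symm) w) = 0 :=
      hQkp _ hmemk _ (hπp w)
    calc Q ⁅x, y⁆ w
        = Q ⁅x, y⁆ (πk w + (p.subtype ∘ₗ Submodule.linearProjOfIsCompl p k hc.symm) w) := by
          rw [hdecomp]
      _ = Q ⁅x, y⁆ (πk w)
          + Q ⁅x, y⁆ ((p.subtype ∘ₗ Submodule.linearProjOfIsCompl p k hc.symm) w) :=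
          map_add _ _ _
      _ = 0 := by rw [h1, h3, add_zero]
  have hbr21 : ∀ x ∈ p₂, ∀ y ∈ p₁, ⁅x, y⁆ = (0 : L) := by
    intro x hx y hy
    rw [← lie_skew, hbr12 y hy x hx, neg_zero]
  -- decompositions of arbitrary elements
  have hsupw : ∀ w : L, ∃ z ∈ k, ∃ w₁ ∈ p₁, ∃ w₂ ∈ p₂, w = z + w₁ + w₂ := by
    intro w
    have hp' : (p.subtype ∘ₗ Submodule.linearProjOfIsCompl p k hc.symm) w ∈ p₁ ⊔ p₂ := by
      rw [hsup]; exact hπp w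
    obtain ⟨w₁, hw₁, w₂, hw₂, hw⟩ := Submodule.mem_sup.mp hp'
    refine ⟨πk w, hπkm w, w₁, hw₁, w₂, hw₂, ?_⟩
    rw [add_assoc, hw]
    exact (hdecomp w).symm
  have hsupw' : ∀ w : L, ∃ z ∈ k, ∃ w₁ ∈ p₂, ∃ w₂ ∈ p₁, w = z + w₁ + w₂ := by
    intro w
    obtain ⟨z, hz, w₁, hw₁, w₂, hw₂, hw⟩ := hsupw w
    exact ⟨z, hz, w₂, hw₂, w₁, hw₁, by rw [hw, add_right_comm]⟩
  -- ideals
  have hid1 : ∀ w : L, ∀ s ∈ g₁, ⁅w, s⁆ ∈ g₁ :=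
    auxIdeal k p p₁ p₂ hc hk1 hbr12 hb11 hsupw
  have hid2 : ∀ w : L, ∀ s ∈ g₂, ⁅w, s⁆ ∈ g₂ :=
    auxIdeal k p p₂ p₁ hc hk2 hbr21 hb22 hsupw'
  -- nontriviality
  have hg1n : g₁ ≠ ⊥ := by
    intro h
    apply hp1n
    rw [eq_bot_iff, ← h]
    exact le_sup_right
  have hg2n : g₂ ≠ ⊥ := by
    intro h
    apply hp2n
    rw [eq_bot_iff, ← h]
    exact le_sup_right
  -- k ≤ k₁ ⊔ k₂
  have hmapk : ∀ M : Submodule ℝ L, Submodule.map πk M ≤ k := by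
    intro M x hx
    rcases Submodule.mem_map.mp hx with ⟨z, _, rfl⟩
    exact hπkm z
  have hsplit : spanBr p p ≤ spanBr p₁ p₁ ⊔ spanBr p₂ p₂ := by
    apply Submodule.span_le.mpr
    rintro _ ⟨x, hx, y, hy, rfl⟩
    have hx' : x ∈ p₁ ⊔ p₂ := by rw [hsup]; exact hx
    have hy' : y ∈ p₁ ⊔ p₂ := by rw [hsup]; exact hy
    obtain ⟨x₁, hx₁, x₂, hx₂, rfl⟩ := Submodule.mem_sup.mp hx'
    obtain ⟨y₁, hy₁, y₂, hy₂, rfl⟩ := Submodule.mem_sup.mp hy'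
    rw [lie_add, add_lie, add_lie, hbr12 x₁ hx₁ y₂ hy₂, hbr21 x₂ hx₂ y₁ hy₁,
      add_zero, zero_add]
    exact Submodule.add_mem _
      (Submodule.mem_sup_left (Submodule.subset_span ⟨x₁, hx₁, y₁, hy₁, rfl⟩))
      (Submodule.mem_sup_right (Submodule.subset_span ⟨x₂, hx₂, y₂, hy₂, rfl⟩))
  have hk12 : k ≤ Submodule.map πk (spanBr p₁ p₁) ⊔ Submodule.map πk (spanBr p₂ p₂) := by
    conv_lhs => rw [← hperv]
    rw [← Submodule.map_sup]
    exact Submodule.map_mono hsplit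
  -- codisjointness
  have hcodtop : g₁ ⊔ g₂ = ⊤ := by
    rw [eq_top_iff, ← codisjoint_iff.mp hc.codisjoint]
    apply sup_le
    · refine hk12.trans (sup_le ?_ ?_)
      · exact le_trans le_sup_left le_sup_left
      · exact le_trans le_sup_left le_sup_right
    · rw [← hsup]
      exact sup_le (le_trans le_sup_right le_sup_left) (le_trans le_sup_right le_sup_right)
  -- orthogonality of g₁ and g₂
  have hK1 := auxK k p p₁ p₂ hc hb11 hbr12
  have horth : ∀ a ∈ g₁, ∀ b ∈ g₂, Q a b = 0 := by
    intro a ha b hb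
    rcases Submodule.mem_sup.mp ha with ⟨u, hu, v, hv, rfl⟩
    rcases Submodule.mem_sup.mp hb with ⟨u', hu', v', hv', rfl⟩
    have huk : u ∈ k := hmapk _ hu
    have hu'k : u' ∈ k := hmapk _ hu'
    have hQuu' : Q u u' = 0 := by
      rcases Submodule.mem_map.mp hu' with ⟨t, ht, rfl⟩
      have h1 : Q u t = 0 := by
        refine Submodule.span_induction ?_ ?_ ?_ ?_ ht
        · rintro _ ⟨x, hx, y, hy, rfl⟩
          have h3 : ⁅x, u⁆ = (0 : L) := by
            rw [← lie_skew, hK1 u hu x hx, neg_zero]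
          have h4 := hQinv x y u
          rw [h3] at h4
          have h5 : Q y (0 : L) = 0 := map_zero (Q y)
          rw [hQsym]
          linarith
        · exact map_zero (Q u)
        · intro a b _ _ ha hb; rw [map_add, ha, hb, add_zero]
        · intro c a _ ha; rw [map_smul, ha, smul_zero]
      have h6 : πk t = t - (p.subtype ∘ₗ Submodule.linearProjOfIsCompl p k hc.symm) t := by
        rw [eq_sub_iff_add_eq]; exact hdecomp t
      rw [h6, map_sub, h1, hQkp u huk _ (hπp t), sub_zero]
    simp only [map_add, LinearMap.add_apply]
    rw [hQuu', hQkp u huk v' (hp2 hv'), hQ12 v hv v' hv', hQsym v u',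
      hQkp u' hu'k v (hp1 hv)]
    ring
  -- disjointness
  have hdisj : Disjoint g₁ g₂ := by
    rw [disjoint_iff, eq_bot_iff]
    intro v hv
    obtain ⟨hv1, hv2⟩ := Submodule.mem_inf.mp hv
    have hv0 : v = 0 := by
      apply hQnd
      intro w
      have hw : w ∈ g₁ ⊔ g₂ := by rw [hcodtop]; trivial
      obtain ⟨a, ha, b, hb, rfl⟩ := Submodule.mem_sup.mp hw
      rw [map_add, horth v hv1 b hb, hQsym v a, horth a ha v hv2, add_zero]
    rw [Submodule.mem_bot]
    exact hv0
  -- k = (k ⊓ g₁) ⊔ (k ⊓ g₂)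
  have hfinal : k = (k ⊓ g₁) ⊔ (k ⊓ g₂) := by
    apply le_antisymm
    · intro x hx
      obtain ⟨a, ha, b, hb, rfl⟩ := Submodule.mem_sup.mp (hk12 hx)
      exact Submodule.add_mem _
        (Submodule.mem_sup_left
          (Submodule.mem_inf.mpr ⟨hmapk _ ha, Submodule.mem_sup_left ha⟩))
        (Submodule.mem_sup_right
          (Submodule.mem_inf.mpr ⟨hmapk _ hb, Submodule.mem_sup_left hb⟩))
    · exact sup_le inf_le_left inf_le_left
  exact ⟨hid1, hid2, hg1n, hg2n, ⟨hdisj, codisjoint_iff.mpr hcodtop⟩, hfinal⟩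
end
end
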